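/- Let ξ₁, ξ₂, … be i.i.d. with P(ξ_i = k) = 2^{-k} for k ≥ 1, and let A_i := |0⟩⟨ξ_i| be the corresponding rank-one random operators on ℓ_1. Then for every x ∈ ℓ_1, T > 0 and ε > 0, P( sup_{t∈[0,T]} ‖(e^{A₁t/n} ⋯ e^{A_n t/n} − e^{(E A) t}) x‖_{ℓ_1} > ε ) ≤ T² Var(x_ξ) / (n ε²), and in particular this probability tends to 0 as n → ∞. -/

import Mathlib

open MeasureTheory ProbabilityTheory Filter
open scoped ENNReal Topology

lemma exp_of_sq_zero {𝔸 : Type*} [NormedRing 𝔸] [NormedAlgebra ℝ 𝔸] [CompleteSpace 𝔸]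
    (a : 𝔸) (h : a * a = 0) : NormedSpace.exp a = 1 + a := by
  rw [NormedSpace.exp_eq_tsum (𝕂 := ℝ)]
  show (∑' n : ℕ, (n.factorial : ℝ)⁻¹ • a ^ n) = 1 + a
  rw [tsum_eq_sum (s := Finset.range 2) ?_]
  · simp [Finset.sum_range_succ]
  · intro n hn
    have h2 : 2 ≤ n := by simp at hn; omega
    obtain ⟨k, rfl⟩ := Nat.exists_eq_add_of_le h2
    rw [pow_add, pow_two, h, zero_mul]
    simp

lemma prod_exp_of_mul_zero {𝔸 : Type*} [NormedRing 𝔸] [NormedAlgebra ℝ 𝔸] [CompleteSpace 𝔸]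
    (B : ℕ → 𝔸) (hB : ∀ i j, B i * B j = 0) (c : ℝ) (n : ℕ) :
    ((List.range n).map (fun i => NormedSpace.exp (c • B i))).prod
      = 1 + c • ∑ i ∈ Finset.range n, B i := by
  induction n with
  | zero => simp
  | succ n ih =>
    rw [List.range_succ, List.map_append, List.prod_append, ih]
    have hsq : (c • B n) * (c • B n) = 0 := by
      rw [smul_mul_assoc, mul_smul_comm, hB]; simp
    have hSB : (∑ i ∈ Finset.range n, B i) * B n = 0 := by
      rw [Finset.sum_mul]
      exact Finset.sum_eq_zero fun i _ => hB i n
    rw [List.map_singleton, List.prod_singleton, exp_of_sq_zero _ hsq,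
      Finset.sum_range_succ]
    rw [mul_add, mul_one, add_mul, one_mul, smul_mul_assoc, mul_smul_comm, hSB]
    simp [smul_add, add_assoc]

lemma iSup_Icc_abs_mul (T c : ℝ) (hT : 0 < T) (hc : 0 ≤ c) :
    (⨆ t ∈ Set.Icc (0:ℝ) T, |t| * c) = T * c := by
  have key : ∀ t : ℝ, (⨆ _ : t ∈ Set.Icc (0:ℝ) T, |t| * c) ≤ T * c := by
    intro t
    refine Real.iSup_le (fun ht => ?_) (by positivity)
    rw [abs_of_nonneg ht.1]
    exact mul_le_mul_of_nonneg_right ht.2 hc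
  apply le_antisymm
  · exact Real.iSup_le key (by positivity)
  · have hb : BddAbove (Set.range fun t : ℝ => ⨆ _ : t ∈ Set.Icc (0:ℝ) T, |t| * c) := by
      refine ⟨T * c, ?_⟩
      rintro _ ⟨t, rfl⟩
      exact key t
    have hT' : T ∈ Set.Icc (0:ℝ) T := ⟨hT.le, le_rfl⟩
    calc T * c = |T| * c := by rw [abs_of_pos hT]
      _ = ⨆ _ : T ∈ Set.Icc (0:ℝ) T, |T| * c := (ciSup_pos (f := fun _ => |T| * c) hT').symm
      _ ≤ _ := le_ciSup hb T

lemma smul_sq_zero {𝔸 : Type*} [NormedRing 𝔸] [NormedAlgebra ℝ 𝔸]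
    (t : ℝ) (a : 𝔸) (h : a * a = 0) : (t • a) * (t • a) = 0 := by
  rw [smul_mul_assoc, mul_smul_comm, h]; simp

noncomputable def evalCLM (k : ℕ) : lp (fun _ : ℕ => ℝ) 1 →L[ℝ] ℝ :=
  LinearMap.mkContinuous
    { toFun := fun y => y k
      map_add' := fun y z => by simp [lp.coeFn_add]
      map_smul' := fun c y => by simp [lp.coeFn_smul] }
    1 (fun y => by
      change ‖(y : ℕ → ℝ) k‖ ≤ 1 * ‖y‖
      simpa using lp.norm_apply_le_norm (by norm_num : (1 : ℝ≥0∞) ≠ 0) y k)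

lemma hsingle_smul (r : ℝ) :
    lp.single (E := fun _ : ℕ => ℝ) 1 (0:ℕ) r = r • lp.single 1 (0:ℕ) (1:ℝ) := by
  rw [← lp.single_smul]
  norm_num

lemma norm_e0 : ‖lp.single (E := fun _ : ℕ => ℝ) 1 (0:ℕ) (1:ℝ)‖ = 1 := by
  have := lp.norm_single (E := fun _ : ℕ => ℝ) (p := 1) (by norm_num) 0 (1:ℝ)
  simpa using this

set_option maxHeartbeats 1000000 in
/-- Law of large numbers for the rank-one random operators `A_i = |0⟩⟨ξ_i|` on `ℓ_1`
with i.i.d. `ξ_i ~ Geom(1/2)`: for every `x ∈ ℓ_1`, `T > 0`, `ε > 0`,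
`P(sup_{t∈[0,T]} ‖(e^{A₁t/n} ⋯ e^{A_n t/n} − e^{(E A)t})x‖₁ > ε) ≤ T² Var(x_ξ)/(nε²)`,
and in particular this probability tends to `0`. -/
theorem lln_rank_one_geometric
    {Ω : Type*} [MeasurableSpace Ω] (μ : Measure Ω) [IsProbabilityMeasure μ]
    (ξ : ℕ → Ω → ℕ) (hξmeas : ∀ i, Measurable (ξ i)) (hξpos : ∀ i ω, 1 ≤ ξ i ω)
    (hindep : iIndepFun (m := fun _ => (inferInstance : MeasurableSpace ℕ)) ξ μ)
    (hgeom : ∀ (i : ℕ) (k : ℕ), 1 ≤ k → μ {ω | ξ i ω = k} = (2 : ℝ≥0∞)⁻¹ ^ k)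
    (A : ℕ → Ω → (lp (fun _ : ℕ => ℝ) 1 →L[ℝ] lp (fun _ : ℕ => ℝ) 1))
    (hA : ∀ (i : ℕ) (ω : Ω) (x : lp (fun _ : ℕ => ℝ) 1),
      A i ω x = lp.single 1 0 (x (ξ i ω)))
    (EA : lp (fun _ : ℕ => ℝ) 1 →L[ℝ] lp (fun _ : ℕ => ℝ) 1)
    (hEA : ∀ (x : lp (fun _ : ℕ => ℝ) 1) (f : lp (fun _ : ℕ => ℝ) 1 →L[ℝ] ℝ),
      ∫ ω, f (A 0 ω x) ∂μ = f (EA x)) :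
    ∀ (x : lp (fun _ : ℕ => ℝ) 1) (T ε : ℝ), 0 < T → 0 < ε →
      (∀ n : ℕ, 1 ≤ n →
        (μ {ω | ε < ⨆ t ∈ Set.Icc (0 : ℝ) T,
            ‖((List.range n).map
                (fun i => NormedSpace.exp ((t / n) • A i ω))).prod x
              - NormedSpace.exp (t • EA) x‖}).toReal
          ≤ T ^ 2 * variance (fun ω => x (ξ 0 ω)) μ / (n * ε ^ 2)) ∧
      Tendsto (fun n : ℕ =>
        μ {ω | ε < ⨆ t ∈ Set.Icc (0 : ℝ) T,
            ‖((List.range n).map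
                (fun i => NormedSpace.exp ((t / n) • A i ω))).prod x
              - NormedSpace.exp (t • EA) x‖}) atTop (𝓝 0) := by
  intro x T ε hT hε
  -- EA identification
  have hEAeq : ∀ y : lp (fun _ : ℕ => ℝ) 1,
      EA y = lp.single 1 0 (∫ ω, y (ξ 0 ω) ∂μ) := by
    intro y
    refine lp.ext (funext fun k => ?_)
    have h2 : ∫ ω, (A 0 ω y) k ∂μ = (EA y) k := hEA y (evalCLM k)
    rw [← h2]
    have hco : ∀ ω, (A 0 ω y) k
        = (lp.single (E := fun _ : ℕ => ℝ) 1 (0:ℕ) (y (ξ 0 ω)) : lp _ 1) k :=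
      fun ω => by rw [hA]
    rcases Nat.eq_zero_or_pos k with hk | hk
    · subst hk
      simp only [hco, lp.single_apply_self]
    · have hk' : k ≠ 0 := hk.ne'
      simp only [hco, lp.single_apply_ne _ _ _ hk']
      simp
  -- EA squared is zero
  have hEA2 : EA * EA = 0 := by
    refine ContinuousLinearMap.ext fun y => ?_
    have h1 : (EA (EA y)) = lp.single 1 0 (∫ ω, (EA y) (ξ 0 ω) ∂μ) := hEAeq _
    rw [ContinuousLinearMap.mul_apply, h1]
    have hz : ∀ ω, (EA y) (ξ 0 ω) = 0 := by
      intro ω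
      rw [hEAeq y]
      exact lp.single_apply_ne _ _ _ (by have := hξpos 0 ω; omega)
    simp only [hz, integral_zero]
    refine lp.ext (funext fun k => ?_)
    rcases Nat.eq_zero_or_pos k with hk | hk
    · subst hk; simp [lp.single_apply_self]
    · rw [lp.single_apply_ne _ _ _ hk.ne']
      simp
  -- products of the A's vanish
  have hAmul : ∀ i j (ω : Ω), A i ω * A j ω = 0 := by
    intro i j ω
    refine ContinuousLinearMap.ext fun y => ?_
    rw [ContinuousLinearMap.mul_apply, hA, hA,
      lp.single_apply_ne _ _ _ (by have := hξpos i ω; omega)]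
    refine lp.ext (funext fun k => ?_)
    rcases Nat.eq_zero_or_pos k with hk | hk
    · subst hk; simp [lp.single_apply_self]
    · rw [lp.single_apply_ne _ _ _ hk.ne']
      simp
  set m : ℝ := ∫ ω, x (ξ 0 ω) ∂μ with hmdef
  set v : ℝ := variance (fun ω => x (ξ 0 ω)) μ with hvdef
  have hv0 : 0 ≤ v := variance_nonneg _ _
  -- the key bound
  have hkey : ∀ n : ℕ, 1 ≤ n →
      μ {ω | ε < ⨆ t ∈ Set.Icc (0 : ℝ) T,
            ‖((List.range n).map
                (fun i => NormedSpace.exp ((t / n) • A i ω))).prod x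
              - NormedSpace.exp (t • EA) x‖}
        ≤ ENNReal.ofReal (T ^ 2 * v / (n * ε ^ 2)) := by
    intro n hn
    have hn0 : (n:ℝ) ≠ 0 := Nat.cast_ne_zero.mpr (by omega)
    set Xi : ℕ → Ω → ℝ := fun i ω => x (ξ i ω) with hXidef
    have hXimeas : ∀ i, Measurable (Xi i) := fun i =>
      (measurable_of_countable _).comp (hξmeas i)
    have hXi2 : ∀ i, MemLp (Xi i) 2 μ := by
      intro i
      refine MemLp.mono_exponent ?_ (le_top : (2:ℝ≥0∞) ≤ ⊤)
      refine memLp_top_of_bound (hXimeas i).aestronglyMeasurable ‖x‖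
        (Filter.Eventually.of_forall fun ω => ?_)
      simpa using lp.norm_apply_le_norm (by norm_num : (1:ℝ≥0∞) ≠ 0) x (ξ i ω)
    have hident : ∀ i, IdentDistrib (Xi i) (Xi 0) μ μ := by
      intro i
      have hξid : IdentDistrib (ξ i) (ξ 0) μ μ := by
        refine ⟨(hξmeas i).aemeasurable, (hξmeas 0).aemeasurable,
          MeasureTheory.Measure.ext_of_singleton fun k => ?_⟩
        rw [Measure.map_apply (hξmeas i) (measurableSet_singleton k),
          Measure.map_apply (hξmeas 0) (measurableSet_singleton k)]
        rcases Nat.eq_zero_or_pos k with hk | hk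
        · subst hk
          have h1 : ξ i ⁻¹' {0} = ∅ := by
            ext ω; simp only [Set.mem_preimage, Set.mem_singleton_iff,
              Set.mem_empty_iff_false, iff_false]
            have := hξpos i ω; omega
          have h2 : ξ 0 ⁻¹' {0} = ∅ := by
            ext ω; simp only [Set.mem_preimage, Set.mem_singleton_iff,
              Set.mem_empty_iff_false, iff_false]
            have := hξpos 0 ω; omega
          rw [h1, h2]
        · have h1 : ξ i ⁻¹' {k} = {ω | ξ i ω = k} := rfl
          have h2 : ξ 0 ⁻¹' {k} = {ω | ξ 0 ω = k} := rfl
          rw [h1, h2, hgeom i k hk, hgeom 0 k hk]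
      exact hξid.comp (measurable_of_countable _)
    have hmean : ∀ i, ∫ ω, Xi i ω ∂μ = m := fun i => (hident i).integral_eq
    have hvar : ∀ i, variance (Xi i) μ = v := fun i => (hident i).variance_eq
    have hvarsum : variance (∑ i ∈ Finset.range n, Xi i) μ = n * v := by
      rw [IndepFun.variance_sum (fun i _ => hXi2 i)
        (fun i _ j _ hij => (hindep.indepFun hij).comp
          (measurable_of_countable _) (measurable_of_countable _))]
      simp [hvar, Finset.sum_const]
    set X : Ω → ℝ := fun ω => (n : ℝ)⁻¹ * ∑ i ∈ Finset.range n, Xi i ω with hXdef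
    have hXeq : X = fun ω => (n:ℝ)⁻¹ * (∑ i ∈ Finset.range n, Xi i) ω := by
      funext ω; simp [hXdef, Finset.sum_apply]
    have hXvar : variance X μ = v / n := by
      rw [hXeq, variance_const_mul, hvarsum]
      field_simp
    have hXmean : ∫ ω, X ω ∂μ = m := by
      rw [hXdef]
      rw [integral_const_mul]
      rw [integral_finset_sum _ (fun i _ => ((hXi2 i).integrable one_le_two))]
      simp only [hmean, Finset.sum_const, Finset.card_range, nsmul_eq_mul]
      field_simp
    have hX2 : MemLp X 2 μ := by
      have h := (memLp_finset_sum' (Finset.range n) (fun i _ => hXi2 i)).const_mul ((n:ℝ)⁻¹)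
      rw [hXeq]; exact h
    have cheb := meas_ge_le_variance_div_sq (μ := μ) hX2 (div_pos hε hT)
    rw [hXmean, hXvar] at cheb
    have hbound : μ {ω | ε / T ≤ |X ω - m|} ≤ ENNReal.ofReal (T^2 * v / (n * ε^2)) := by
      refine cheb.trans_eq (congrArg _ ?_)
      field_simp
    -- pointwise norm identity
    have hnorm : ∀ (ω : Ω) (t : ℝ),
        ‖((List.range n).map
            (fun i => NormedSpace.exp ((t / (n:ℝ)) • A i ω))).prod x
          - NormedSpace.exp (t • EA) x‖ = |t| * |X ω - m| := by
      intro ω t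
      rw [prod_exp_of_mul_zero (fun i => A i ω) (fun i j => hAmul i j ω) (t / n) n]
      rw [exp_of_sq_zero (t • EA) (smul_sq_zero t EA hEA2)]
      have hSx : (∑ i ∈ Finset.range n, A i ω) x
          = (∑ i ∈ Finset.range n, Xi i ω) • lp.single 1 (0:ℕ) (1:ℝ) := by
        rw [ContinuousLinearMap.sum_apply, Finset.sum_smul]
        refine Finset.sum_congr rfl fun i _ => ?_
        rw [hA, hsingle_smul]
      have hEAx : EA x = m • lp.single 1 (0:ℕ) (1:ℝ) := by
        rw [hEAeq x, ← hmdef, hsingle_smul]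
      simp only [ContinuousLinearMap.add_apply, ContinuousLinearMap.one_apply,
        ContinuousLinearMap.smul_apply, hSx, hEAx]
      rw [smul_smul, smul_smul]
      have hcollect : ∀ a b : ℝ,
          x + a • lp.single 1 (0:ℕ) (1:ℝ) - (x + b • lp.single 1 (0:ℕ) (1:ℝ))
            = (a - b) • lp.single 1 (0:ℕ) (1:ℝ) := fun a b => by
        rw [sub_smul]; abel
      rw [hcollect, norm_smul, norm_e0, mul_one, Real.norm_eq_abs, ← abs_mul]
      congr 1
      simp only [hXdef]
      field_simp
    have hsup : ∀ ω : Ω,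
        (⨆ t ∈ Set.Icc (0 : ℝ) T,
          ‖((List.range n).map
              (fun i => NormedSpace.exp ((t / (n:ℝ)) • A i ω))).prod x
            - NormedSpace.exp (t • EA) x‖) = T * |X ω - m| := by
      intro ω
      have h1 : (⨆ t ∈ Set.Icc (0 : ℝ) T,
          ‖((List.range n).map
              (fun i => NormedSpace.exp ((t / (n:ℝ)) • A i ω))).prod x
            - NormedSpace.exp (t • EA) x‖)
          = ⨆ t ∈ Set.Icc (0 : ℝ) T, |t| * |X ω - m| :=
        iSup_congr fun t => iSup_congr fun _ => hnorm ω t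
      rw [h1, iSup_Icc_abs_mul T _ hT (abs_nonneg _)]
    have hsetq : {ω | ε < ⨆ t ∈ Set.Icc (0 : ℝ) T,
            ‖((List.range n).map
                (fun i => NormedSpace.exp ((t / n) • A i ω))).prod x
              - NormedSpace.exp (t • EA) x‖}
        ⊆ {ω | ε / T ≤ |X ω - m|} := by
      intro ω hω
      have hω' : ε < T * |X ω - m| := by
        simp only [Set.mem_setOf_eq] at hω
        rwa [hsup ω] at hω
      exact le_of_lt ((div_lt_iff₀ hT).mpr (by linarith [mul_comm T |X ω - m|]))
    exact (measure_mono hsetq).trans hbound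
  constructor
  · intro n hn
    refine ENNReal.toReal_le_of_le_ofReal (by positivity) (hkey n hn)
  · have hupper : Tendsto (fun n : ℕ => ENNReal.ofReal (T ^ 2 * v / (n * ε ^ 2)))
        atTop (𝓝 0) := by
      have h1 : Tendsto (fun n : ℕ => (T ^ 2 * v / ε ^ 2) / (n:ℝ)) atTop (𝓝 0) :=
        tendsto_const_div_atTop_nhds_zero_nat _
      have h2 : ∀ n : ℕ, T ^ 2 * v / ((n:ℝ) * ε ^ 2) = (T ^ 2 * v / ε ^ 2) / (n:ℝ) := by
        intro n
        rw [div_div]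
        ring_nf
      simp only [h2]
      have h3 := ENNReal.tendsto_ofReal h1
      simpa using h3
    refine tendsto_of_tendsto_of_tendsto_of_le_of_le' tendsto_const_nhds hupper
      (Filter.Eventually.of_forall fun n => zero_le) ?_
    exact eventually_atTop.2 ⟨1, fun n hn => hkey n hn⟩
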